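/- arXiv:2507.22986 — 7 statements merged into one kernel-verified Lean document; each statement's English description precedes it below -/
import Mathlib

section
/- For a measurable function f on a σ-finite measure space, any u ≥ 0 and any t ∈ [0, μ(X)), the integral ∫_0^t (f↓(s) - u) ds is at most ∫_u^∞ D_f(v) dv, where f↓ is the decreasing rearrangement of f, with equality when D_f(u) ≤ t ≤ D_f(u⁻). -/
open MeasureTheory
open scoped ENNReal

/-- The distribution function `D_f(t) = μ {x : f x > t}`. -/
noncomputable def distFun {X : Type*} [MeasurableSpace X] (μ : Measure X)
    (f : X → ℝ) (t : ℝ) : ℝ≥0∞ :=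
  μ {x | t < f x}

/-- The decreasing rearrangement `f↓(s) = inf {t : D_f(t) ≤ s}`. -/
noncomputable def decRearr {X : Type*} [MeasurableSpace X] (μ : Measure X)
    (f : X → ℝ) (s : ℝ) : ℝ :=
  sInf {t : ℝ | distFun μ f t ≤ ENNReal.ofReal s}

section Aux

variable {X : Type*} [MeasurableSpace X] (μ : Measure X) (f : X → ℝ)

lemma distFun_anti : Antitone (distFun μ f) :=
  fun _ _ hab => measure_mono fun _ hx => lt_of_le_of_lt hab hx

lemma distFun_right_cont {a : ℝ} {c : ℝ≥0∞} (h : ∀ w, a < w → distFun μ f w ≤ c) :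
    distFun μ f a ≤ c := by
  have hset : {x | a < f x} = ⋃ n : ℕ, {x | a + 1/(n+1) < f x} := by
    ext x
    simp only [Set.mem_setOf_eq, Set.mem_iUnion]
    constructor
    · intro hx
      obtain ⟨n, hn⟩ := exists_nat_one_div_lt (sub_pos.2 hx)
      exact ⟨n, by linarith⟩
    · rintro ⟨n, hn⟩
      have : (0:ℝ) < 1/(n+1) := by positivity
      linarith
  have hmono : Monotone fun n : ℕ => {x | a + 1/((n:ℝ)+1) < f x} := by
    intro m n hmn x hx
    simp only [Set.mem_setOf_eq] at *
    have h1 : (1:ℝ)/(n+1) ≤ 1/(m+1) := by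
      apply one_div_le_one_div_of_le
      · positivity
      · have : (m:ℝ) ≤ n := Nat.cast_le.2 hmn
        linarith
    linarith
  calc distFun μ f a = μ (⋃ n : ℕ, {x | a + 1/((n:ℝ)+1) < f x}) := by
        rw [distFun, hset]
    _ = ⨆ n : ℕ, μ {x | a + 1/((n:ℝ)+1) < f x} := hmono.measure_iUnion
    _ ≤ c := iSup_le fun n => h _ (lt_add_of_pos_right a (by positivity))

lemma decRearr_le {s v : ℝ} (hv : 0 ≤ v) (h : distFun μ f v ≤ ENNReal.ofReal s) :
    decRearr μ f s ≤ v := by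
  by_cases hb : BddBelow {t : ℝ | distFun μ f t ≤ ENNReal.ofReal s}
  · exact csInf_le hb h
  · rw [decRearr, Real.sInf_of_not_bddBelow hb]; exact hv

lemma lt_decRearr {s v : ℝ} (hne : ∃ w, distFun μ f w ≤ ENNReal.ofReal s)
    (h : ENNReal.ofReal s < distFun μ f v) : v < decRearr μ f s := by
  set S := {t : ℝ | distFun μ f t ≤ ENNReal.ofReal s} with hS
  have hSne : S.Nonempty := hne
  have hlb : ∀ w ∈ S, v ≤ w := by
    intro w hw
    by_contra hwv
    push_neg at hwv
    exact absurd (le_trans (distFun_anti μ f hwv.le) hw) h.not_ge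
  have hmem : sInf S ∈ S := by
    show distFun μ f (sInf S) ≤ _
    apply distFun_right_cont
    intro w hw
    obtain ⟨y, hy, hyw⟩ := exists_lt_of_csInf_lt hSne hw
    exact le_trans (distFun_anti μ f hyw.le) hy
  have hle : v ≤ sInf S := le_csInf hSne hlb
  have hne' : v ≠ sInf S := by
    intro he
    exact absurd (he ▸ hmem : distFun μ f v ≤ _) h.not_ge
  exact lt_of_le_of_ne hle hne'

lemma exists_distFun_lt (hf : Measurable f) {u : ℝ} (hfin : distFun μ f u ≠ ∞)
    {c : ℝ≥0∞} (hc : 0 < c) : ∃ w, distFun μ f w ≤ c := by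
  have hT : ∀ n : ℕ, MeasurableSet {x | u + (n:ℝ) < f x} := fun n =>
    measurableSet_lt measurable_const hf
  have hanti : Antitone fun n : ℕ => {x | u + (n:ℝ) < f x} := by
    intro m n hmn x hx
    simp only [Set.mem_setOf_eq] at *
    have : (m:ℝ) ≤ n := Nat.cast_le.2 hmn
    linarith
  have hint : ⋂ n : ℕ, {x | u + (n:ℝ) < f x} = (∅ : Set X) := by
    ext x
    simp only [Set.mem_iInter, Set.mem_setOf_eq, Set.mem_empty_iff_false, iff_false,
      not_forall, not_lt]
    obtain ⟨n, hn⟩ := exists_nat_ge (f x - u)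
    exact ⟨n, by linarith⟩
  have hfin0 : μ {x | u + ((0:ℕ):ℝ) < f x} ≠ ∞ := by
    simpa [distFun] using hfin
  have htend := tendsto_measure_iInter_atTop (μ := μ)
    (fun n => (hT n).nullMeasurableSet) hanti ⟨0, hfin0⟩
  rw [hint, measure_empty] at htend
  obtain ⟨n, hn⟩ := (htend.eventually_lt_const hc).exists
  exact ⟨u + n, le_of_lt hn⟩

end Aux

/-- For a measurable `f` on a σ-finite measure space, any `u ≥ 0` and any `t ∈ [0, μ(X))`,
`∫_0^t (f↓(s) - u) ds ≤ ∫_u^∞ D_f(v) dv`, with equality whenever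
`D_f(u) ≤ t ≤ D_f(u⁻) = μ {x : f x ≥ u}`. -/
theorem integral_decRearr_sub_le_integral_distFun
    {X : Type*} [MeasurableSpace X] (μ : Measure X) [SigmaFinite μ]
    (f : X → ℝ) (hf : Measurable f) (u : ℝ) (hu : 0 ≤ u)
    (t : ℝ) (ht0 : 0 ≤ t) (ht : ENNReal.ofReal t < μ Set.univ) :
    (∫⁻ s in Set.Ioo 0 t, ENNReal.ofReal (decRearr μ f s - u)
        ≤ ∫⁻ v in Set.Ioi u, distFun μ f v)
    ∧ ((distFun μ f u ≤ ENNReal.ofReal t ∧ ENNReal.ofReal t ≤ μ {x | u ≤ f x}) →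
        ∫⁻ s in Set.Ioo 0 t, ENNReal.ofReal (decRearr μ f s - u)
          = ∫⁻ v in Set.Ioi u, distFun μ f v) := by
  classical
  have hDanti : Antitone (distFun μ f) := distFun_anti μ f
  have hDmeas : Measurable (distFun μ f) := hDanti.measurable
  set A : Set (ℝ × ℝ) := {p : ℝ × ℝ | ENNReal.ofReal p.1 < distFun μ f p.2} with hA
  have hAmeas : MeasurableSet A :=
    measurableSet_lt (ENNReal.measurable_ofReal.comp measurable_fst)
      (hDmeas.comp measurable_snd)
  have hVmeas : ∀ s : ℝ, MeasurableSet {v : ℝ | ENNReal.ofReal s < distFun μ f v} :=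
    fun s => measurableSet_lt measurable_const hDmeas
  have hSmeas : ∀ v : ℝ, MeasurableSet {s : ℝ | ENNReal.ofReal s < distFun μ f v} :=
    fun v => measurableSet_lt ENNReal.measurable_ofReal measurable_const
  -- Tonelli swap
  have hswap :
      ∫⁻ s in Set.Ioo 0 t, volume ({v | ENNReal.ofReal s < distFun μ f v} ∩ Set.Ioi u)
        = ∫⁻ v in Set.Ioi u,
            volume ({s | ENNReal.ofReal s < distFun μ f v} ∩ Set.Ioo 0 t) := by
    have h1 : ∀ s : ℝ, volume ({v | ENNReal.ofReal s < distFun μ f v} ∩ Set.Ioi u)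
        = ∫⁻ v in Set.Ioi u, A.indicator 1 (s, v) := by
      intro s
      have : (fun v => A.indicator 1 (s, v))
          = ({v | ENNReal.ofReal s < distFun μ f v}).indicator (1 : ℝ → ℝ≥0∞) := by
        ext v
        simp [Set.indicator_apply, hA]
      rw [this, lintegral_indicator_one (hVmeas s),
        Measure.restrict_apply (hVmeas s)]
    have h2 : ∀ v : ℝ, volume ({s | ENNReal.ofReal s < distFun μ f v} ∩ Set.Ioo 0 t)
        = ∫⁻ s in Set.Ioo 0 t, A.indicator 1 (s, v) := by
      intro v
      have : (fun s => A.indicator 1 (s, v))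
          = ({s | ENNReal.ofReal s < distFun μ f v}).indicator (1 : ℝ → ℝ≥0∞) := by
        ext s
        simp [Set.indicator_apply, hA]
      rw [this, lintegral_indicator_one (hSmeas v),
        Measure.restrict_apply (hSmeas v)]
    simp_rw [h1, h2]
    exact lintegral_lintegral_swap ((measurable_one.indicator hAmeas).aemeasurable)
  -- compute the inner volume on the v-side
  have hvol_s : ∀ v : ℝ, volume ({s | ENNReal.ofReal s < distFun μ f v} ∩ Set.Ioo 0 t)
      = min (distFun μ f v) (ENNReal.ofReal t) := by
    intro v
    rcases le_or_gt (ENNReal.ofReal t) (distFun μ f v) with hc | hc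
    · have hset : {s | ENNReal.ofReal s < distFun μ f v} ∩ Set.Ioo 0 t = Set.Ioo 0 t := by
        apply Set.inter_eq_self_of_subset_right
        intro s hs
        exact lt_of_lt_of_le
          ((ENNReal.ofReal_lt_ofReal_iff (lt_trans hs.1 hs.2)).2 hs.2) hc
      rw [hset, Real.volume_Ioo, sub_zero, min_eq_right hc]
    · have hvt : distFun μ f v ≠ ∞ := (hc.trans_le le_top).ne
      have htt : (distFun μ f v).toReal < t := (ENNReal.lt_ofReal_iff_toReal_lt hvt).1 hc
      have hset : {s | ENNReal.ofReal s < distFun μ f v} ∩ Set.Ioo 0 t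
          = Set.Ioo 0 ((distFun μ f v).toReal) := by
        ext s
        simp only [Set.mem_inter_iff, Set.mem_setOf_eq, Set.mem_Ioo]
        constructor
        · rintro ⟨h1, h2, h3⟩
          exact ⟨h2, (ENNReal.ofReal_lt_iff_lt_toReal h2.le hvt).1 h1⟩
        · rintro ⟨h1, h2⟩
          exact ⟨(ENNReal.ofReal_lt_iff_lt_toReal h1.le hvt).2 h2, h1, lt_trans h2 htt⟩
      rw [hset, Real.volume_Ioo, sub_zero, ENNReal.ofReal_toReal hvt, min_eq_left hc.le]
  -- the lower bound on the s-side
  have hsub : ∀ s : ℝ, Set.Ioo u (decRearr μ f s)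
      ⊆ {v | ENNReal.ofReal s < distFun μ f v} ∩ Set.Ioi u := by
    intro s v hv
    refine ⟨?_, hv.1⟩
    by_contra hcon
    simp only [Set.mem_setOf_eq, not_lt] at hcon
    exact absurd (decRearr_le μ f (le_trans hu hv.1.le) hcon) hv.2.not_ge
  constructor
  · calc ∫⁻ s in Set.Ioo 0 t, ENNReal.ofReal (decRearr μ f s - u)
        ≤ ∫⁻ s in Set.Ioo 0 t,
            volume ({v | ENNReal.ofReal s < distFun μ f v} ∩ Set.Ioi u) := by
          apply lintegral_mono
          intro s
          calc ENNReal.ofReal (decRearr μ f s - u)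
              = volume (Set.Ioo u (decRearr μ f s)) := (Real.volume_Ioo).symm
            _ ≤ _ := measure_mono (hsub s)
      _ = ∫⁻ v in Set.Ioi u, min (distFun μ f v) (ENNReal.ofReal t) := by
          rw [hswap]; simp_rw [hvol_s]
      _ ≤ ∫⁻ v in Set.Ioi u, distFun μ f v :=
          lintegral_mono fun v => min_le_left _ _
  · rintro ⟨hDu, -⟩
    have hfin : distFun μ f u ≠ ∞ := (lt_of_le_of_lt hDu ENNReal.ofReal_lt_top).ne
    have hseq : ∀ s ∈ Set.Ioo (0:ℝ) t,
        ENNReal.ofReal (decRearr μ f s - u)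
          = volume ({v | ENNReal.ofReal s < distFun μ f v} ∩ Set.Ioi u) := by
      intro s hs
      have hne : ∃ w, distFun μ f w ≤ ENNReal.ofReal s :=
        exists_distFun_lt μ f hf hfin (ENNReal.ofReal_pos.2 hs.1)
      have hset : {v | ENNReal.ofReal s < distFun μ f v} ∩ Set.Ioi u
          = Set.Ioo u (decRearr μ f s) := by
        apply Set.Subset.antisymm
        · rintro v ⟨h1, h2⟩
          exact ⟨h2, lt_decRearr μ f hne h1⟩
        · exact hsub s
      rw [hset, Real.volume_Ioo]
    calc ∫⁻ s in Set.Ioo 0 t, ENNReal.ofReal (decRearr μ f s - u)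
        = ∫⁻ s in Set.Ioo 0 t,
            volume ({v | ENNReal.ofReal s < distFun μ f v} ∩ Set.Ioi u) :=
          setLIntegral_congr_fun measurableSet_Ioo hseq
      _ = ∫⁻ v in Set.Ioi u, min (distFun μ f v) (ENNReal.ofReal t) := by
          rw [hswap]; simp_rw [hvol_s]
      _ = ∫⁻ v in Set.Ioi u, distFun μ f v := by
          apply setLIntegral_congr_fun measurableSet_Ioi
          intro v hv
          exact min_eq_left (le_trans (hDanti (le_of_lt hv)) hDu)
end

section
/- If f and g are normalized integrable functions and for all u ≥ 0 one has ∫_X (f-u)⁺ dμ ≥ ∫_X (g-u)⁺ dμ, then the positive Lorenz curve of f dominates that of g: for all s ∈ [0, μ(X)), ∫_0^s ((f⁺)↓)(v) dv ≥ ∫_0^s ((g⁺)↓)(v) dv. -/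
open MeasureTheory
open scoped ENNReal

namespace LorenzAux

open Set

variable {X : Type*} [MeasurableSpace X] {μ : Measure X} {F : X → ℝ}

lemma max_max_sub (a u : ℝ) (hu : 0 ≤ u) : max (max a 0 - u) 0 = max (a - u) 0 := by
  rcases le_total a 0 with h | h
  · rw [max_eq_right h, max_eq_right, max_eq_right (by linarith)]; linarith
  · rw [max_eq_left h]

lemma ofReal_max_zero (a : ℝ) : ENNReal.ofReal (max a 0) = ENNReal.ofReal a := by
  rcases le_total a 0 with h | h
  · rw [max_eq_right h, ENNReal.ofReal_zero, ENNReal.ofReal_eq_zero.mpr h]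
  · rw [max_eq_left h]

lemma distFun_anti : Antitone (distFun μ F) := fun _ _ hab =>
  measure_mono fun _ hx => lt_of_le_of_lt hab hx

lemma distFun_iSup (w : ℝ) :
    distFun μ F w = ⨆ n : ℕ, distFun μ F (w + 1 / (n + 1)) := by
  have hset : {x | w < F x} = ⋃ n : ℕ, {x | w + 1 / ((n : ℝ) + 1) < F x} := by
    ext x
    simp only [mem_setOf_eq, mem_iUnion]
    constructor
    · intro hx
      obtain ⟨n, hn⟩ := exists_nat_one_div_lt (sub_pos.mpr hx)
      exact ⟨n, by linarith⟩
    · rintro ⟨n, hn⟩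
      have h1 : (0 : ℝ) < 1 / ((n : ℝ) + 1) := by positivity
      linarith
  have hd : Directed (· ⊆ ·) (fun n : ℕ => {x | w + 1 / ((n : ℝ) + 1) < F x}) := by
    apply Monotone.directed_le
    intro a b hab x hx
    simp only [mem_setOf_eq] at hx ⊢
    have h1 : (1 : ℝ) / ((b : ℝ) + 1) ≤ 1 / ((a : ℝ) + 1) := by
      apply one_div_le_one_div_of_le
      · positivity
      · exact_mod_cast by omega
    linarith
  rw [distFun, hset, hd.measure_iUnion]
  rfl

lemma S_nonempty (hFm : Measurable F) (hFi : Integrable F μ) (hF0 : ∀ x, 0 ≤ F x)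
    {v : ℝ} (hv : 0 < v) :
    ∃ t : ℝ, distFun μ F t ≤ ENNReal.ofReal v := by
  set I : ℝ≥0∞ := ∫⁻ x, ENNReal.ofReal (F x) ∂μ with hI
  have hIlt : I ≠ ∞ := by
    have h2 := hFi.2
    rw [HasFiniteIntegral] at h2
    have : I = ∫⁻ x, (‖F x‖₊ : ℝ≥0∞) ∂μ :=
      lintegral_congr fun x => (Real.enorm_eq_ofReal (hF0 x)).symm
    rw [this]; exact h2.ne
  have hv' : ENNReal.ofReal v ≠ 0 := by
    simp [ENNReal.ofReal_eq_zero, not_le, hv]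
  set c : ℝ≥0∞ := I / ENNReal.ofReal v + 1 with hc
  have hc0 : c ≠ 0 := by simp [hc]
  have hct : c ≠ ∞ := by
    simp only [hc, Ne, ENNReal.add_eq_top, ENNReal.one_ne_top, or_false]
    exact (ENNReal.div_lt_top hIlt hv').ne
  refine ⟨c.toReal, ?_⟩
  by_contra hcon
  push_neg at hcon
  have hmar : c * μ {x | c ≤ ENNReal.ofReal (F x)} ≤ I := by
    exact mul_meas_ge_le_lintegral₀ (μ := μ)
      ((ENNReal.measurable_ofReal.comp hFm).aemeasurable) c
  have hsub : distFun μ F c.toReal ≤ μ {x | c ≤ ENNReal.ofReal (F x)} := by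
    apply measure_mono
    intro x hx
    simp only [mem_setOf_eq] at hx ⊢
    calc c = ENNReal.ofReal c.toReal := (ENNReal.ofReal_toReal hct).symm
    _ ≤ ENNReal.ofReal (F x) := ENNReal.ofReal_le_ofReal hx.le
  have h1 : I + ENNReal.ofReal v ≤ I := by
    calc I + ENNReal.ofReal v = (I / ENNReal.ofReal v) * ENNReal.ofReal v + ENNReal.ofReal v := by
          rw [ENNReal.div_mul_cancel hv' ENNReal.ofReal_ne_top]
    _ = c * ENNReal.ofReal v := by rw [hc, add_mul, one_mul]
    _ ≤ c * distFun μ F c.toReal := by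
          exact mul_le_mul_right hcon.le c
    _ ≤ c * μ {x | c ≤ ENNReal.ofReal (F x)} := mul_le_mul_right hsub c
    _ ≤ I := hmar
  have h2 : I < I + ENNReal.ofReal v :=
    ENNReal.lt_add_right hIlt hv'
  exact absurd (lt_of_lt_of_le h2 h1) (lt_irrefl _)

lemma S_subset (hF0 : ∀ x, 0 ≤ F x) {v : ℝ} (hv : ENNReal.ofReal v < μ univ) :
    {t : ℝ | distFun μ F t ≤ ENNReal.ofReal v} ⊆ Ici 0 := by
  intro t ht
  simp only [mem_setOf_eq] at ht
  by_contra hlt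
  simp only [mem_Ici, not_le] at hlt
  have huniv : {x | t < F x} = univ :=
    eq_univ_of_forall fun x => lt_of_lt_of_le hlt (hF0 x)
  rw [distFun, huniv] at ht
  exact absurd (lt_of_lt_of_le hv ht) (lt_irrefl _)

lemma not_bddBelow_univ_real : ¬ BddBelow (univ : Set ℝ) := by
  rintro ⟨b, hb⟩
  have := hb (mem_univ (b - 1))
  linarith

lemma decRearr_eq_zero {v : ℝ} (hv : μ univ ≤ ENNReal.ofReal v) :
    decRearr μ F v = 0 := by
  have hS : {t : ℝ | distFun μ F t ≤ ENNReal.ofReal v} = univ :=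
    eq_univ_of_forall fun t => le_trans (measure_mono (subset_univ _)) hv
  rw [decRearr, hS, Real.sInf_of_not_bddBelow not_bddBelow_univ_real]

lemma decRearr_nonneg (hFm : Measurable F) (hFi : Integrable F μ) (hF0 : ∀ x, 0 ≤ F x)
    {v : ℝ} (hv : 0 < v) (hvu : ENNReal.ofReal v < μ univ) :
    0 ≤ decRearr μ F v :=
  le_csInf (S_nonempty hFm hFi hF0 hv) fun t ht => S_subset hF0 hvu ht

lemma decRearr_le_iff (hFm : Measurable F) (hFi : Integrable F μ) (hF0 : ∀ x, 0 ≤ F x)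
    {v w : ℝ} (hv : 0 < v) (hw : 0 ≤ w) :
    decRearr μ F v ≤ w ↔ distFun μ F w ≤ ENNReal.ofReal v := by
  rcases lt_or_ge (ENNReal.ofReal v) (μ univ) with hvu | hvu
  · constructor
    · intro hle
      rw [distFun_iSup w]
      apply iSup_le
      intro n
      have hlt : sInf {t : ℝ | distFun μ F t ≤ ENNReal.ofReal v} < w + 1 / ((n : ℝ) + 1) := by
        have h1 : (0 : ℝ) < 1 / ((n : ℝ) + 1) := by positivity
        calc sInf {t : ℝ | distFun μ F t ≤ ENNReal.ofReal v} ≤ w := hle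
        _ < w + 1 / ((n : ℝ) + 1) := by linarith
      obtain ⟨t, htS, htlt⟩ := exists_lt_of_csInf_lt (S_nonempty hFm hFi hF0 hv) hlt
      exact le_trans (distFun_anti htlt.le) htS
    · intro hD
      exact csInf_le ⟨0, fun t ht => S_subset hF0 hvu ht⟩ hD
  · constructor
    · intro _
      exact le_trans (measure_mono (subset_univ _)) hvu
    · intro _
      rw [decRearr_eq_zero hvu]
      exact hw

lemma decRearr_anti (hFm : Measurable F) (hFi : Integrable F μ) (hF0 : ∀ x, 0 ≤ F x) :
    AntitoneOn (decRearr μ F) (Ioi 0) := by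
  intro a ha b hb hab
  rcases lt_or_ge (ENNReal.ofReal b) (μ univ) with hbu | hbu
  · apply csInf_le_csInf ⟨0, fun t ht => S_subset hF0 hbu ht⟩ (S_nonempty hFm hFi hF0 ha)
    intro t ht
    exact le_trans ht (ENNReal.ofReal_le_ofReal hab)
  · rw [decRearr_eq_zero hbu]
    rcases lt_or_ge (ENNReal.ofReal a) (μ univ) with hau | hau
    · exact decRearr_nonneg hFm hFi hF0 ha hau
    · rw [decRearr_eq_zero hau]

lemma equimeas (hFm : Measurable F) (hFi : Integrable F μ) (hF0 : ∀ x, 0 ≤ F x)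
    {w : ℝ} (hw : 0 ≤ w) :
    volume.restrict (Ioi (0 : ℝ)) {v : ℝ | w < decRearr μ F v} = distFun μ F w := by
  rw [Measure.restrict_apply' measurableSet_Ioi]
  have hset : {v : ℝ | w < decRearr μ F v} ∩ Ioi 0
      = {v : ℝ | ENNReal.ofReal v < distFun μ F w} ∩ Ioi 0 := by
    ext v
    simp only [mem_inter_iff, mem_setOf_eq, mem_Ioi, and_congr_left_iff]
    intro hv
    rw [← not_le, ← not_le]
    constructor
    · intro hn hc; exact hn ((decRearr_le_iff hFm hFi hF0 hv hw).mpr hc)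
    · intro hn hc; exact hn ((decRearr_le_iff hFm hFi hF0 hv hw).mp hc)
  rw [hset]
  rcases eq_or_ne (distFun μ F w) ∞ with hinf | hinf
  · have : {v : ℝ | ENNReal.ofReal v < distFun μ F w} ∩ Ioi 0 = Ioi 0 := by
      apply inter_eq_right.mpr
      intro v _
      simp only [mem_setOf_eq, hinf]
      exact ENNReal.ofReal_lt_top
    rw [this, hinf, Real.volume_Ioi]
  · have : {v : ℝ | ENNReal.ofReal v < distFun μ F w} ∩ Ioi 0
        = Ioo 0 ((distFun μ F w).toReal) := by
      ext v
      simp only [mem_inter_iff, mem_setOf_eq, mem_Ioi, mem_Ioo]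
      constructor
      · rintro ⟨h1, h2⟩
        exact ⟨h2, (ENNReal.ofReal_lt_iff_lt_toReal h2.le hinf).mp h1⟩
      · rintro ⟨h1, h2⟩
        exact ⟨(ENNReal.ofReal_lt_iff_lt_toReal h1.le hinf).mpr h2, h1⟩
    rw [this, Real.volume_Ioo, sub_zero, ENNReal.ofReal_toReal hinf]

lemma decRearr_aemeas (hFm : Measurable F) (hFi : Integrable F μ) (hF0 : ∀ x, 0 ≤ F x) :
    AEMeasurable (decRearr μ F) (volume.restrict (Ioi (0 : ℝ))) := by
  have hanti : Antitone (fun a : ℝ => decRearr μ F (Real.exp a)) := fun a b hab =>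
    decRearr_anti hFm hFi hF0 (Real.exp_pos a) (Real.exp_pos b) (Real.exp_le_exp.mpr hab)
  have hm : Measurable fun a : ℝ => decRearr μ F (Real.exp a) := hanti.measurable
  refine AEMeasurable.congr ((hm.comp Real.measurable_log).aemeasurable) ?_
  filter_upwards [ae_restrict_mem measurableSet_Ioi] with v hv
  simp only [Function.comp_apply, Real.exp_log hv]

lemma layercake_eq (hFm : Measurable F) (hFi : Integrable F μ) (hF0 : ∀ x, 0 ≤ F x)
    {u : ℝ} (hu : 0 ≤ u) :
    ∫⁻ v in Ioi (0 : ℝ), ENNReal.ofReal (max (decRearr μ F v - u) 0)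
      = ∫⁻ x, ENNReal.ofReal (max (F x - u) 0) ∂μ := by
  have hμside := lintegral_eq_lintegral_meas_lt μ (f := fun x => max (F x - u) 0)
    (ae_of_all _ fun x => le_max_right _ _)
    ((hFm.sub measurable_const).max measurable_const).aemeasurable
  have hRae : AEMeasurable (fun v => max (decRearr μ F v - u) 0)
      (volume.restrict (Ioi (0 : ℝ))) :=
    ((decRearr_aemeas hFm hFi hF0).sub aemeasurable_const).max aemeasurable_const
  have hLside := lintegral_eq_lintegral_meas_lt (volume.restrict (Ioi (0 : ℝ)))
    (f := fun v => max (decRearr μ F v - u) 0)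
    (ae_of_all _ fun v => le_max_right _ _) hRae
  rw [hLside, hμside]
  apply setLIntegral_congr_fun measurableSet_Ioi
  intro t ht
  simp only [mem_Ioi] at ht
  have h1 : {v : ℝ | t < max (decRearr μ F v - u) 0} = {v : ℝ | t + u < decRearr μ F v} := by
    ext v
    simp only [mem_setOf_eq, lt_max_iff]
    constructor
    · rintro (h | h)
      · linarith
      · linarith
    · intro h; left; linarith
  have h2 : {x | t < max (F x - u) 0} = {x | t + u < F x} := by
    ext x
    simp only [mem_setOf_eq, lt_max_iff]
    constructor
    · rintro (h | h)
      · linarith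
      · linarith
    · intro h; left; linarith
  beta_reduce
  rw [h1, h2]
  exact equimeas hFm hFi hF0 (by linarith)

lemma core {X : Type*} [MeasurableSpace X] (μ : Measure X) (F G : X → ℝ)
    (hFm : Measurable F) (hGm : Measurable G) (hF0 : ∀ x, 0 ≤ F x) (hG0 : ∀ x, 0 ≤ G x)
    (hFi : Integrable F μ) (hGi : Integrable G μ)
    (h : ∀ u : ℝ, 0 ≤ u → ∫ x, max (G x - u) 0 ∂μ ≤ ∫ x, max (F x - u) 0 ∂μ)
    {s : ℝ} (hs : 0 < s) (hsu : ENNReal.ofReal s < μ univ) :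
    ∫⁻ v in Ioo (0 : ℝ) s, ENNReal.ofReal (decRearr μ G v)
      ≤ ∫⁻ v in Ioo (0 : ℝ) s, ENNReal.ofReal (decRearr μ F v) := by
  set u : ℝ := decRearr μ F s with hu
  have hu0 : 0 ≤ u := decRearr_nonneg hFm hFi hF0 hs hsu
  -- Step A
  have stepA : ∫⁻ v in Ioo (0 : ℝ) s, ENNReal.ofReal (decRearr μ G v)
      ≤ ENNReal.ofReal u * ENNReal.ofReal s
        + ∫⁻ v in Ioi (0 : ℝ), ENNReal.ofReal (max (decRearr μ G v - u) 0) := by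
    calc ∫⁻ v in Ioo (0 : ℝ) s, ENNReal.ofReal (decRearr μ G v)
        ≤ ∫⁻ v in Ioo (0 : ℝ) s,
            (ENNReal.ofReal u + ENNReal.ofReal (max (decRearr μ G v - u) 0)) := by
          apply lintegral_mono
          intro v
          calc ENNReal.ofReal (decRearr μ G v)
              ≤ ENNReal.ofReal (u + max (decRearr μ G v - u) 0) := by
                apply ENNReal.ofReal_le_ofReal
                have := le_max_left (decRearr μ G v - u) 0
                linarith
          _ ≤ _ := ENNReal.ofReal_add_le
      _ = ENNReal.ofReal u * volume (Ioo (0:ℝ) s)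
            + ∫⁻ v in Ioo (0 : ℝ) s, ENNReal.ofReal (max (decRearr μ G v - u) 0) := by
          rw [lintegral_add_left measurable_const]
          simp [lintegral_const, Measure.restrict_apply]
      _ ≤ ENNReal.ofReal u * ENNReal.ofReal s
            + ∫⁻ v in Ioi (0 : ℝ), ENNReal.ofReal (max (decRearr μ G v - u) 0) := by
          apply add_le_add
          · rw [Real.volume_Ioo, sub_zero]
          · exact lintegral_mono' (Measure.restrict_mono Ioo_subset_Ioi_self le_rfl) le_rfl
  -- Step B
  have stepB : ∫⁻ v in Ioi (0 : ℝ), ENNReal.ofReal (max (decRearr μ G v - u) 0)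
      ≤ ∫⁻ v in Ioi (0 : ℝ), ENNReal.ofReal (max (decRearr μ F v - u) 0) := by
    rw [layercake_eq hGm hGi hG0 hu0, layercake_eq hFm hFi hF0 hu0]
    have hGint : Integrable (fun x => max (G x - u) 0) μ := by
      apply hGi.mono (((hGm.sub measurable_const).max measurable_const).aestronglyMeasurable)
      apply ae_of_all
      intro x
      rw [Real.norm_eq_abs, Real.norm_eq_abs, abs_of_nonneg (le_max_right _ _),
        abs_of_nonneg (hG0 x)]
      show max (G x - u) 0 ≤ G x
      rcases le_total (G x - u) 0 with hc | hc
      · rw [max_eq_right hc]; exact hG0 x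
      · rw [max_eq_left hc]; linarith
    have hFint : Integrable (fun x => max (F x - u) 0) μ := by
      apply hFi.mono (((hFm.sub measurable_const).max measurable_const).aestronglyMeasurable)
      apply ae_of_all
      intro x
      rw [Real.norm_eq_abs, Real.norm_eq_abs, abs_of_nonneg (le_max_right _ _),
        abs_of_nonneg (hF0 x)]
      show max (F x - u) 0 ≤ F x
      rcases le_total (F x - u) 0 with hc | hc
      · rw [max_eq_right hc]; exact hF0 x
      · rw [max_eq_left hc]; linarith
    rw [← ofReal_integral_eq_lintegral_ofReal hGint (ae_of_all _ fun x => le_max_right _ _),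
      ← ofReal_integral_eq_lintegral_ofReal hFint (ae_of_all _ fun x => le_max_right _ _)]
    exact ENNReal.ofReal_le_ofReal (h u hu0)
  -- Step C
  have stepC : ∫⁻ v in Ioi (0 : ℝ), ENNReal.ofReal (max (decRearr μ F v - u) 0)
      = ∫⁻ v in Ioo (0 : ℝ) s, ENNReal.ofReal (max (decRearr μ F v - u) 0) := by
    rw [← Ioo_union_Ici_eq_Ioi hs, lintegral_union measurableSet_Ici]
    · have hzero : ∫⁻ v in Ici s, ENNReal.ofReal (max (decRearr μ F v - u) 0) = 0 := by
        rw [setLIntegral_congr_fun measurableSet_Ici (g := fun _ => 0), lintegral_zero]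
        intro v hv
        simp only [mem_Ici] at hv
        have hle : decRearr μ F v ≤ u :=
          decRearr_anti hFm hFi hF0 hs (lt_of_lt_of_le hs hv) hv
        beta_reduce
        rw [max_eq_right (by linarith), ENNReal.ofReal_zero]
      rw [hzero, add_zero]
    · apply disjoint_left.mpr
      intro v hv hv2
      simp only [mem_Ioo] at hv
      simp only [mem_Ici] at hv2
      linarith [hv.2]
  -- Step D
  have stepD : ENNReal.ofReal u * ENNReal.ofReal s
        + ∫⁻ v in Ioo (0 : ℝ) s, ENNReal.ofReal (max (decRearr μ F v - u) 0)
      = ∫⁻ v in Ioo (0 : ℝ) s, ENNReal.ofReal (decRearr μ F v) := by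
    have hcongr : ∫⁻ v in Ioo (0 : ℝ) s, ENNReal.ofReal (decRearr μ F v)
        = ∫⁻ v in Ioo (0 : ℝ) s,
            (ENNReal.ofReal u + ENNReal.ofReal (max (decRearr μ F v - u) 0)) := by
      apply setLIntegral_congr_fun measurableSet_Ioo
      intro v hv
      simp only [mem_Ioo] at hv
      have hge : u ≤ decRearr μ F v :=
        decRearr_anti hFm hFi hF0 hv.1 (lt_trans hv.1 hv.2) hv.2.le
      beta_reduce
      rw [max_eq_left (by linarith), ← ENNReal.ofReal_add hu0 (by linarith)]
      ring_nf
    rw [hcongr, lintegral_add_left measurable_const]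
    simp only [lintegral_const, Measure.restrict_apply MeasurableSet.univ, univ_inter,
      Real.volume_Ioo, sub_zero]
  calc ∫⁻ v in Ioo (0 : ℝ) s, ENNReal.ofReal (decRearr μ G v)
      ≤ ENNReal.ofReal u * ENNReal.ofReal s
        + ∫⁻ v in Ioi (0 : ℝ), ENNReal.ofReal (max (decRearr μ G v - u) 0) := stepA
    _ ≤ ENNReal.ofReal u * ENNReal.ofReal s
        + ∫⁻ v in Ioi (0 : ℝ), ENNReal.ofReal (max (decRearr μ F v - u) 0) :=
          add_le_add_right stepB _
    _ = ENNReal.ofReal u * ENNReal.ofReal s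
        + ∫⁻ v in Ioo (0 : ℝ) s, ENNReal.ofReal (max (decRearr μ F v - u) 0) := by rw [stepC]
    _ = ∫⁻ v in Ioo (0 : ℝ) s, ENNReal.ofReal (decRearr μ F v) := stepD

lemma lintegral_ofReal_decRearr_lt_top (hFm : Measurable F) (hFi : Integrable F μ)
    (hF0 : ∀ x, 0 ≤ F x) :
    ∫⁻ v in Ioi (0 : ℝ), ENNReal.ofReal (decRearr μ F v) ≠ ∞ := by
  have h := layercake_eq hFm hFi hF0 (le_refl (0 : ℝ))
  simp only [sub_zero] at h
  have h1 : ∫⁻ v in Ioi (0 : ℝ), ENNReal.ofReal (decRearr μ F v)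
      = ∫⁻ x, ENNReal.ofReal (F x) ∂μ := by
    rw [← lintegral_congr fun x => ofReal_max_zero (F x), ← h]
    exact lintegral_congr fun v => (ofReal_max_zero (decRearr μ F v)).symm
  rw [h1]
  have h2 := hFi.2
  rw [HasFiniteIntegral] at h2
  have h3 : ∫⁻ x, ENNReal.ofReal (F x) ∂μ = ∫⁻ x, (‖F x‖₊ : ℝ≥0∞) ∂μ :=
    lintegral_congr fun x => (Real.enorm_eq_ofReal (hF0 x)).symm
  rw [h3]
  exact h2.ne

end LorenzAux

open LorenzAux Set in
/-- If `f` and `g` are normalized integrable functions on a σ-finite measure space and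
`∫ (f - u)⁺ dμ ≥ ∫ (g - u)⁺ dμ` for all `u ≥ 0`, then the positive Lorenz curve of `f`
dominates that of `g`: for all `s ∈ [0, μ(X))`,
`∫_0^s (f⁺)↓(v) dv ≥ ∫_0^s (g⁺)↓(v) dv`. -/
theorem lorenz_curve_dominates_of_pos_part_integrals
    {X : Type*} [MeasurableSpace X] (μ : Measure X) [SigmaFinite μ]
    (f g : X → ℝ) (hf : Integrable f μ) (hg : Integrable g μ)
    (hfnorm : ∫ x, f x ∂μ = 1) (hgnorm : ∫ x, g x ∂μ = 1)
    (h : ∀ u : ℝ, 0 ≤ u →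
      ∫ x, max (g x - u) 0 ∂μ ≤ ∫ x, max (f x - u) 0 ∂μ) :
    ∀ s : ℝ, 0 ≤ s → ENNReal.ofReal s < μ Set.univ →
      ∫ v in Set.Ioo 0 s, decRearr μ (fun x => max (g x) 0) v
        ≤ ∫ v in Set.Ioo 0 s, decRearr μ (fun x => max (f x) 0) v := by
  intro s hs0 hsu
  rcases eq_or_lt_of_le hs0 with rfl | hs
  · simp
  -- measurable representatives
  set f' : X → ℝ := hf.1.mk f with hf'def
  set g' : X → ℝ := hg.1.mk g with hg'def
  have hfeq : f =ᵐ[μ] f' := hf.1.ae_eq_mk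
  have hgeq : g =ᵐ[μ] g' := hg.1.ae_eq_mk
  set F : X → ℝ := fun x => max (f' x) 0 with hFdef
  set G : X → ℝ := fun x => max (g' x) 0 with hGdef
  have hFm : Measurable F := hf.1.measurable_mk.max measurable_const
  have hGm : Measurable G := hg.1.measurable_mk.max measurable_const
  have hF0 : ∀ x, 0 ≤ F x := fun x => le_max_right _ _
  have hG0 : ∀ x, 0 ≤ G x := fun x => le_max_right _ _
  have hFi : Integrable F μ := (hf.congr hfeq).pos_part
  have hGi : Integrable G μ := (hg.congr hgeq).pos_part
  -- decRearr equality
  have hdistF : distFun μ (fun x => max (f x) 0) = distFun μ F := by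
    funext t
    apply measure_congr
    filter_upwards [hfeq] with x hx
    show (t < max (f x) 0) = (t < max (f' x) 0)
    rw [hx]
  have hdistG : distFun μ (fun x => max (g x) 0) = distFun μ G := by
    funext t
    apply measure_congr
    filter_upwards [hgeq] with x hx
    show (t < max (g x) 0) = (t < max (g' x) 0)
    rw [hx]
  have hRF : decRearr μ (fun x => max (f x) 0) = decRearr μ F := by
    funext v; rw [decRearr, decRearr, hdistF]
  have hRG : decRearr μ (fun x => max (g x) 0) = decRearr μ G := by
    funext v; rw [decRearr, decRearr, hdistG]
  rw [hRF, hRG]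
  -- transfer hypothesis
  have h' : ∀ u : ℝ, 0 ≤ u → ∫ x, max (G x - u) 0 ∂μ ≤ ∫ x, max (F x - u) 0 ∂μ := by
    intro u hu
    have hGeq : ∫ x, max (G x - u) 0 ∂μ = ∫ x, max (g x - u) 0 ∂μ := by
      apply integral_congr_ae
      filter_upwards [hgeq] with x hx
      rw [hGdef]
      simp only
      rw [← hx, max_max_sub _ _ hu]
    have hFeq2 : ∫ x, max (F x - u) 0 ∂μ = ∫ x, max (f x - u) 0 ∂μ := by
      apply integral_congr_ae
      filter_upwards [hfeq] with x hx
      rw [hFdef]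
      simp only
      rw [← hx, max_max_sub _ _ hu]
    rw [hGeq, hFeq2]
    exact h u hu
  have key := core μ F G hFm hGm hF0 hG0 hFi hGi h' hs hsu
  -- convert Bochner integrals to lintegrals
  have hnnG : 0 ≤ᵐ[volume.restrict (Ioo (0:ℝ) s)] decRearr μ G := by
    filter_upwards [ae_restrict_mem measurableSet_Ioo] with v hv
    exact decRearr_nonneg hGm hGi hG0 hv.1
      (lt_of_le_of_lt (ENNReal.ofReal_le_ofReal hv.2.le) hsu)
  have hnnF : 0 ≤ᵐ[volume.restrict (Ioo (0:ℝ) s)] decRearr μ F := by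
    filter_upwards [ae_restrict_mem measurableSet_Ioo] with v hv
    exact decRearr_nonneg hFm hFi hF0 hv.1
      (lt_of_le_of_lt (ENNReal.ofReal_le_ofReal hv.2.le) hsu)
  have hmG : AEStronglyMeasurable (decRearr μ G) (volume.restrict (Ioo (0:ℝ) s)) :=
    ((decRearr_aemeas hGm hGi hG0).mono_measure
      (Measure.restrict_mono Ioo_subset_Ioi_self le_rfl)).aestronglyMeasurable
  have hmF : AEStronglyMeasurable (decRearr μ F) (volume.restrict (Ioo (0:ℝ) s)) :=
    ((decRearr_aemeas hFm hFi hF0).mono_measure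
      (Measure.restrict_mono Ioo_subset_Ioi_self le_rfl)).aestronglyMeasurable
  rw [integral_eq_lintegral_of_nonneg_ae hnnG hmG,
    integral_eq_lintegral_of_nonneg_ae hnnF hmF]
  apply ENNReal.toReal_mono
  · apply ne_of_lt
    apply lt_of_le_of_lt (lintegral_mono' (Measure.restrict_mono Ioo_subset_Ioi_self le_rfl) le_rfl)
    exact lt_of_le_of_ne le_top (lintegral_ofReal_decRearr_lt_top hFm hFi hF0)
  · exact key
end

section
/- The negative volume NV(f) = (‖f‖₁ − 1)/2 is monotone under semidoubly stochastic integral operators: if S is semidoubly stochastic and f ∈ L¹(X,μ) with ∫ f dμ = 1, then NV(Sf) ≤ NV(f). -/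
open MeasureTheory
open scoped ENNReal

/-- The negative volume `NV(f) = (‖f‖₁ - 1) / 2` is monotone under semidoubly stochastic
integral operators: if `S` is semidoubly stochastic and `f ∈ L¹(X, μ)` with `∫ f dμ = 1`,
then `NV(S f) ≤ NV(f)`. -/
theorem negativeVolume_sds_le
    {X : Type*} [MeasurableSpace X] (μ : Measure X) [SigmaFinite μ]
    (S : X → X → ℝ) (hSmeas : Measurable (Function.uncurry S))
    (hSnonneg : ∀ x y, 0 ≤ S x y)
    (hcol : ∀ᵐ y ∂μ, ∫ x, S x y ∂μ = 1)
    (hrow : ∀ᵐ x ∂μ, ∫ y, S x y ∂μ ≤ 1)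
    (f : X → ℝ) (hf : Integrable f μ) (hnorm : ∫ x, f x ∂μ = 1) :
    ((∫ x, |∫ y, S x y * f y ∂μ| ∂μ) - 1) / 2 ≤ ((∫ x, |f x| ∂μ) - 1) / 2 := by
  set F : X × X → ℝ := fun p => S p.1 p.2 * |f p.2| with hFdef
  have hfabs : Integrable (fun y => |f y|) μ := hf.abs
  have hFmeas : AEStronglyMeasurable F (μ.prod μ) :=
    hSmeas.aestronglyMeasurable.mul hfabs.1.comp_snd
  have hFnonneg : ∀ p : X × X, 0 ≤ F p :=
    fun p => mul_nonneg (hSnonneg _ _) (abs_nonneg _)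
  -- a.e. columns are integrable with integral 1
  have hcol' : ∀ᵐ y ∂μ, Integrable (fun x => S x y) μ ∧ ∫ x, S x y ∂μ = 1 := by
    filter_upwards [hcol] with y hy
    refine ⟨?_, hy⟩
    by_contra h
    rw [integral_undef h] at hy; norm_num at hy
  have hlcol : ∀ᵐ y ∂μ, ∫⁻ x, ENNReal.ofReal (S x y) ∂μ = 1 := by
    filter_upwards [hcol'] with y hy
    rw [← ofReal_integral_eq_lintegral_ofReal hy.1
      (Filter.Eventually.of_forall fun x => hSnonneg x y), hy.2, ENNReal.ofReal_one]
  -- lintegral of F over the product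
  have hinner : ∀ᵐ y ∂μ, ∫⁻ x, ENNReal.ofReal (F (x, y)) ∂μ = ENNReal.ofReal |f y| := by
    filter_upwards [hlcol] with y hy
    have : (fun x => ENNReal.ofReal (F (x, y)))
        = fun x => ENNReal.ofReal (S x y) * ENNReal.ofReal |f y| := by
      funext x
      simp only [hFdef, ENNReal.ofReal_mul (hSnonneg x y)]
    have hm : Measurable fun x => ENNReal.ofReal (S x y) :=
      (hSmeas.comp (measurable_id.prodMk measurable_const)).ennreal_ofReal
    rw [this, lintegral_mul_const _ hm, hy, one_mul]
  have hlin : ∫⁻ p, ENNReal.ofReal (F p) ∂(μ.prod μ) = ∫⁻ y, ENNReal.ofReal |f y| ∂μ := by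
    rw [lintegral_prod_symm _ hFmeas.aemeasurable.ennreal_ofReal]
    exact lintegral_congr_ae hinner
  have hFint : Integrable F (μ.prod μ) := by
    refine ⟨hFmeas, ?_⟩
    rw [hasFiniteIntegral_iff_ofReal (Filter.Eventually.of_forall hFnonneg), hlin]
    have := hf.2
    rw [hasFiniteIntegral_iff_norm] at this
    simpa [Real.norm_eq_abs] using this
  have h1 : Integrable (fun x => ∫ y, F (x, y) ∂μ) μ := hFint.integral_prod_left
  have h2 : ∫ x, |∫ y, S x y * f y ∂μ| ∂μ ≤ ∫ x, ∫ y, F (x, y) ∂μ ∂μ := by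
    refine integral_mono_of_nonneg (Filter.Eventually.of_forall fun x => abs_nonneg _) h1
      (Filter.Eventually.of_forall fun x => ?_)
    calc |∫ y, S x y * f y ∂μ| ≤ ∫ y, |S x y * f y| ∂μ := by
          simpa only [Real.norm_eq_abs] using
            norm_integral_le_integral_norm (fun y => S x y * f y) (μ := μ)
      _ = ∫ y, F (x, y) ∂μ := by
          congr 1; funext y
          simp [hFdef, abs_mul, abs_of_nonneg (hSnonneg x y)]
  have h3 : ∫ x, ∫ y, F (x, y) ∂μ ∂μ = ∫ y, ∫ x, F (x, y) ∂μ ∂μ :=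
    integral_integral_swap hFint
  have h4 : ∫ y, ∫ x, F (x, y) ∂μ ∂μ = ∫ y, |f y| ∂μ := by
    refine integral_congr_ae ?_
    filter_upwards [hcol'] with y hy
    have : (fun x => F (x, y)) = fun x => S x y • |f y| := by
      funext x; simp [hFdef, smul_eq_mul]
    rw [this, integral_smul_const, hy.2, one_smul]
  have hmain : ∫ x, |∫ y, S x y * f y ∂μ| ∂μ ≤ ∫ x, |f x| ∂μ :=
    h2.trans_eq (h3.trans h4)
  linarith
end

section
/- Relative majorization reduces to majorization under change of measure: let q be strictly positive and measurable on (X,μ), and define dν = q dμ. Then an integral operator S on L¹(X,μ) is stochastic with Sq ≤ q (a.e.) if and only if the operator T with kernel T(x,y) = S(x,y)/q(x) is semidoubly stochastic on L¹(X,ν); moreover Sf = g implies T(f/q) = g/q. -/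
open MeasureTheory
open scoped ENNReal

/-- Relative majorization reduces to majorization under a change of measure.  Let `q` be
strictly positive and measurable on `(X, μ)` and `dν = q dμ`.  Then an integral operator `S`
on `L¹(X, μ)` is stochastic with `S q ≤ q` a.e. if and only if the operator `T` with kernel
`T(x,y) = S(x,y) / q(x)` is semidoubly stochastic on `L¹(X, ν)`; moreover `S f = g` implies
`T (f/q) = g/q`. -/
theorem relative_sds_iff_sds_withDensity
    {X : Type*} [MeasurableSpace X] (μ : Measure X) [SigmaFinite μ]
    (q : X → ℝ) (hq : ∀ x, 0 < q x) (hqmeas : Measurable q)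
    (S : X → X → ℝ) (hSmeas : Measurable (Function.uncurry S))
    (hSnonneg : ∀ x y, 0 ≤ S x y) :
    (((∀ᵐ y ∂μ, ∫ x, S x y ∂μ = 1)
        ∧ (∀ᵐ x ∂μ, ∫ y, S x y * q y ∂μ ≤ q x))
      ↔ ((∀ᵐ y ∂(μ.withDensity fun x => ENNReal.ofReal (q x)),
            ∫ x, S x y / q x ∂(μ.withDensity fun x => ENNReal.ofReal (q x)) = 1)
        ∧ (∀ᵐ x ∂(μ.withDensity fun x => ENNReal.ofReal (q x)),
            ∫ y, S x y / q x ∂(μ.withDensity fun x => ENNReal.ofReal (q x)) ≤ 1)))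
    ∧ (∀ f g : X → ℝ, (∀ x, ∫ y, S x y * f y ∂μ = g x) →
        ∀ x, ∫ y, (S x y / q x) * (f y / q y)
            ∂(μ.withDensity fun x => ENNReal.ofReal (q x)) = g x / q x) := by
  set ν := μ.withDensity fun x => ENNReal.ofReal (q x) with hν
  have hqm : Measurable fun x => (q x).toNNReal := hqmeas.real_toNNReal
  have hint : ∀ (g : X → ℝ), ∫ a, g a ∂ν = ∫ a, q a * g a ∂μ := by
    intro g
    rw [hν, show (fun x => ENNReal.ofReal (q x)) = fun x => ((q x).toNNReal : ℝ≥0∞) from rfl,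
      integral_withDensity_eq_integral_smul hqm]
    refine integral_congr_ae (Filter.Eventually.of_forall fun a => ?_)
    simp [NNReal.smul_def, Real.coe_toNNReal _ (hq a).le]
  have hae : ∀ (p : X → Prop), (∀ᵐ x ∂ν, p x) ↔ (∀ᵐ x ∂μ, p x) := by
    intro p
    rw [hν, ae_withDensity_iff hqmeas.ennreal_ofReal]
    constructor
    · intro h
      filter_upwards [h] with x hx
      exact hx (ENNReal.ofReal_pos.mpr (hq x)).ne'
    · intro h
      filter_upwards [h] with x hx _
      exact hx
  have key1 : ∀ y, ∫ x, S x y / q x ∂ν = ∫ x, S x y ∂μ := by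
    intro y
    rw [hint]
    refine integral_congr_ae (Filter.Eventually.of_forall fun x => ?_)
    exact mul_div_cancel₀ _ (hq x).ne'
  have key2 : ∀ x, ∫ y, S x y / q x ∂ν = (∫ y, S x y * q y ∂μ) / q x := by
    intro x
    rw [hint, ← integral_div]
    refine integral_congr_ae (Filter.Eventually.of_forall fun y => ?_)
    ring
  constructor
  · constructor
    · rintro ⟨h1, h2⟩
      refine ⟨(hae _).mpr ?_, (hae _).mpr ?_⟩
      · filter_upwards [h1] with y hy
        rw [key1]; exact hy
      · filter_upwards [h2] with x hx
        rw [key2]; exact (div_le_one (hq x)).mpr hx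
    · rintro ⟨h1, h2⟩
      constructor
      · filter_upwards [(hae _).mp h1] with y hy
        rw [key1] at hy; exact hy
      · filter_upwards [(hae _).mp h2] with x hx
        rw [key2] at hx; exact (div_le_one (hq x)).mp hx
  · intro f g hfg x
    rw [hint]
    have heq : (fun y => q y * (S x y / q x * (f y / q y)))
        = fun y => (S x y * f y) / q x := by
      funext y
      have h1 : q y * (f y / q y) = f y := mul_div_cancel₀ _ (hq y).ne'
      calc q y * (S x y / q x * (f y / q y))
          = q y * (f y / q y) * S x y / q x := by ring
        _ = f y * S x y / q x := by rw [h1]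
        _ = S x y * f y / q x := by ring
    rw [heq, integral_div, hfg x]
end

section
/- For the Husimi function of the n-th Fock state relative to vacuum, the relative decreasing rearrangement is Q↓(u) = (−ln u)ⁿ/n! on (0,1], and the relative Lorenz curve satisfies the recursion L_n(s) = s·(−ln s)ⁿ/n! + L_{n−1}(s), so that L_n(s) = s·(1 + Σ_{k=1}^n (−ln s)^k/k!) ≥ L_{n-1}(s) for all s ∈ [0,1]. -/
open MeasureTheory
open scoped ENNReal

/-- The relative decreasing rearrangement `Q↓_n(u) = (-ln u)ⁿ / n!` of the ratio of the
Husimi function of the `n`-th Fock state to that of the vacuum. -/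
noncomputable def husimiRearr (n : ℕ) (u : ℝ) : ℝ :=
  (-Real.log u) ^ n / n.factorial

/-- The relative Lorenz curve `L_n(s) = ∫_0^s Q↓_n(u) du`. -/
noncomputable def husimiLorenz (n : ℕ) (s : ℝ) : ℝ :=
  ∫ u in Set.Ioc (0 : ℝ) s, husimiRearr n u

open Filter Real Set
open scoped Topology

/-- The antiderivative `u ↦ ∑_{k=0}^n u (-ln u)^k / k!` of `husimiRearr n`. -/
noncomputable def hG (n : ℕ) (u : ℝ) : ℝ :=
  ∑ k ∈ Finset.range (n + 1), u * (-Real.log u) ^ k / k.factorial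

lemma tendsto_mul_neg_log_pow (k : ℕ) :
    Tendsto (fun x : ℝ => x * (-Real.log x) ^ k) (𝓝[>] (0:ℝ)) (𝓝 0) := by
  have h1 : Tendsto (fun x : ℝ => -Real.log x) (𝓝[>] (0:ℝ)) atTop :=
    tendsto_neg_atBot_atTop.comp tendsto_log_nhdsGT_zero
  have h2 := (Real.tendsto_pow_mul_exp_neg_atTop_nhds_zero k).comp h1
  refine h2.congr' ?_
  filter_upwards [self_mem_nhdsWithin] with x (hx : 0 < x)
  simp [Function.comp, neg_neg, Real.exp_log hx, mul_comm]

lemma hasDerivAt_hG (n : ℕ) {u : ℝ} (hu : 0 < u) :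
    HasDerivAt (hG n) (husimiRearr n u) u := by
  induction n with
  | zero =>
      have : hG 0 = fun u : ℝ => u := by
        funext v; simp [hG]
      rw [this]
      simpa [husimiRearr] using hasDerivAt_id' u
  | succ n ih =>
      have hterm : HasDerivAt (fun v : ℝ => v * (-Real.log v) ^ (n + 1) / (n + 1).factorial)
          (husimiRearr (n + 1) u - husimiRearr n u) u := by
        have hlog : HasDerivAt (fun v : ℝ => -Real.log v) (-(1 / u)) u :=
          (Real.hasDerivAt_log hu.ne').neg.congr_deriv (by ring)
        have hpow : HasDerivAt (fun v : ℝ => (-Real.log v) ^ (n + 1))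
            ((n + 1 : ℕ) * (-Real.log u) ^ n * (-(1 / u))) u := by
          simpa using (hlog.fun_pow (n + 1))
        have := ((hasDerivAt_id' u).fun_mul hpow).div_const ((n + 1).factorial : ℝ)
        refine this.congr_deriv ?_
        have hfac : ((n + 1).factorial : ℝ) = (n + 1 : ℕ) * n.factorial := by
          rw [Nat.factorial_succ]; push_cast; ring
        unfold husimiRearr
        rw [hfac]
        field_simp [husimiRearr, hfac]
        ring
      have := (ih.fun_add hterm)
      have heq : (fun v => hG n v + v * (-Real.log v) ^ (n + 1) / (n + 1).factorial)
          = hG (n + 1) := by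
        funext v; simp [hG, Finset.sum_range_succ]
      rw [heq] at this
      exact this.congr_deriv (by ring)

lemma continuousOn_hG (n : ℕ) (s : ℝ) : ContinuousOn (hG n) (Icc 0 s) := by
  intro x hx
  rcases eq_or_lt_of_le hx.1 with h0 | h0
  · subst h0
    have h0 : hG n 0 = 0 := by simp [hG]
    have : Tendsto (hG n) (𝓝[>] (0:ℝ)) (𝓝 0) := by
      have := tendsto_finset_sum (Finset.range (n + 1))
        (fun k _ => (tendsto_mul_neg_log_pow k).div_const (k.factorial : ℝ))
      simp at this; exact this
    have hIci : Tendsto (hG n) (𝓝[Set.Ici (0:ℝ)] 0) (𝓝 0) := by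
      rw [← Set.Ioi_insert, nhdsWithin_insert, tendsto_sup]
      refine ⟨?_, this⟩
      simpa [h0] using (tendsto_pure_nhds (hG n) 0)
    rw [ContinuousWithinAt, h0]
    exact hIci.mono_left (nhdsWithin_mono _ Set.Icc_subset_Ici_self)
  · have hcont : ContinuousAt (hG n) x := by
      have : ContinuousAt Real.log x := Real.continuousAt_log h0.ne'
      unfold hG
      fun_prop (disch := exact h0.ne')
    exact hcont.continuousWithinAt

lemma husimiLorenz_eq_hG (n : ℕ) {s : ℝ} (h0 : 0 < s) (h1 : s ≤ 1) :
    husimiLorenz n s = hG n s := by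
  have hderiv : ∀ x ∈ Ioo (0:ℝ) s, HasDerivAt (hG n) (husimiRearr n x) x :=
    fun x hx => hasDerivAt_hG n hx.1
  have hpos : ∀ x ∈ Ioo (0:ℝ) s, 0 ≤ husimiRearr n x := by
    intro x hx
    have hlog : Real.log x ≤ 0 := Real.log_nonpos hx.1.le (hx.2.le.trans h1)
    exact div_nonneg (pow_nonneg (by linarith) n) (Nat.cast_nonneg _)
  have hcont := continuousOn_hG n s
  have hint : IntegrableOn (husimiRearr n) (Ioc 0 s) :=
    intervalIntegral.integrableOn_deriv_of_nonneg hcont hderiv hpos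
  have hint' : IntervalIntegrable (husimiRearr n) volume 0 s := by
    rw [intervalIntegrable_iff_integrableOn_Ioc_of_le h0.le]; exact hint
  have hftc := intervalIntegral.integral_eq_sub_of_hasDeriv_right_of_le h0.le hcont
    (fun x hx => (hderiv x hx).hasDerivWithinAt) hint'
  have : husimiLorenz n s = ∫ u in (0:ℝ)..s, husimiRearr n u := by
    rw [intervalIntegral.integral_of_le h0.le]; rfl
  rw [this, hftc]
  simp [hG]

lemma husimiLorenz_zero (n : ℕ) : husimiLorenz n 0 = 0 := by
  simp [husimiLorenz]

/-- For the Husimi function of the `n`-th Fock state relative to vacuum, the relative Lorenz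
curve satisfies `L_0(s) = s`, the recursion
`L_n(s) = s (-ln s)ⁿ/n! + L_{n-1}(s)`, hence the closed form
`L_n(s) = s (1 + Σ_{k=1}^n (-ln s)^k / k!)`, the monotonicity `L_n(s) ≥ L_{n-1}(s)` for all
`s ∈ [0,1]`, and `L_n(1) = 1`. -/
theorem husimiLorenz_recursion :
    (∀ s ∈ Set.Icc (0 : ℝ) 1, husimiLorenz 0 s = s)
    ∧ (∀ n : ℕ, ∀ s ∈ Set.Icc (0 : ℝ) 1,
        husimiLorenz (n + 1) s
          = s * (-Real.log s) ^ (n + 1) / (n + 1).factorial + husimiLorenz n s)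
    ∧ (∀ n : ℕ, ∀ s ∈ Set.Icc (0 : ℝ) 1,
        husimiLorenz n s
          = s * (1 + ∑ k ∈ Finset.Icc 1 n, (-Real.log s) ^ k / k.factorial))
    ∧ (∀ n : ℕ, ∀ s ∈ Set.Icc (0 : ℝ) 1, husimiLorenz n s ≤ husimiLorenz (n + 1) s)
    ∧ (∀ n : ℕ, husimiLorenz n 1 = 1) := by
  have part2 : ∀ n : ℕ, ∀ s ∈ Set.Icc (0 : ℝ) 1,
      husimiLorenz (n + 1) s
        = s * (-Real.log s) ^ (n + 1) / (n + 1).factorial + husimiLorenz n s := by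
    intro n s hs
    rcases eq_or_lt_of_le hs.1 with h0 | h0
    · simp [← h0, husimiLorenz_zero]
    · rw [husimiLorenz_eq_hG (n + 1) h0 hs.2, husimiLorenz_eq_hG n h0 hs.2]
      simp [hG, Finset.sum_range_succ]
      ring
  have part3 : ∀ n : ℕ, ∀ s ∈ Set.Icc (0 : ℝ) 1,
      husimiLorenz n s
        = s * (1 + ∑ k ∈ Finset.Icc 1 n, (-Real.log s) ^ k / k.factorial) := by
    intro n s hs
    rcases eq_or_lt_of_le hs.1 with h0 | h0
    · simp [← h0, husimiLorenz_zero]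
    · rw [husimiLorenz_eq_hG n h0 hs.2]
      rw [hG, Finset.range_eq_Ico, Finset.sum_eq_sum_Ico_succ_bot (Nat.succ_pos n),
        Nat.succ_eq_add_one, Finset.Ico_add_one_right_eq_Icc]
      rw [mul_add, mul_one, Finset.mul_sum]
      simp [mul_div_assoc]
  refine ⟨?_, part2, part3, ?_, ?_⟩
  · intro s hs
    rcases eq_or_lt_of_le hs.1 with h0 | h0
    · simp [← h0, husimiLorenz_zero]
    · rw [husimiLorenz_eq_hG 0 h0 hs.2]; simp [hG]
  · intro n s hs
    rw [part2 n s hs]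
    have hlog : Real.log s ≤ 0 := Real.log_nonpos hs.1 hs.2
    have : 0 ≤ s * (-Real.log s) ^ (n + 1) / (n + 1).factorial :=
      div_nonneg (mul_nonneg hs.1 (pow_nonneg (by linarith) _)) (Nat.cast_nonneg _)
    linarith
  · intro n
    rw [part3 n 1 ⟨zero_le_one, le_refl 1⟩]
    rw [Finset.sum_eq_zero]
    · simp
    · intro k hk
      have : k ≠ 0 := by
        have := (Finset.mem_Icc.mp hk).1; omega
      simp [this]
end

section
/- The Gaussian kernel K((x,p),(x',p')) = (1/(π√det Y)) exp(−(z − Xz' − δ)ᵀ Y⁻¹ (z − Xz' − δ)) on ℝ² × ℝ², where z=(x,p), Y is positive definite, X is a 2×2 matrix and δ ∈ ℝ², satisfies ∫ K dz = 1 for all z' and ∫ K dz' = 1/|det X| for all z; hence K is semidoubly stochastic if and only if |det X| ≥ 1. -/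
open MeasureTheory Matrix
open scoped ENNReal

lemma cont_qf (M : Matrix (Fin 2) (Fin 2) ℝ) : Continuous fun v : Fin 2 → ℝ => v ⬝ᵥ M.mulVec v := by
  simp only [dotProduct, Matrix.mulVec]
  fun_prop

lemma integral_comp_mulVec (M : Matrix (Fin 2) (Fin 2) ℝ) (hM : M.det ≠ 0)
    (f : (Fin 2 → ℝ) → ℝ) (hf : Continuous f) :
    ∫ z : Fin 2 → ℝ, f (M.mulVec z) = |M.det|⁻¹ * ∫ w : Fin 2 → ℝ, f w := by
  have hdet : LinearMap.det (Matrix.toLin' M) = M.det := LinearMap.det_toLin' M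
  have hmap := Real.map_linearMap_volume_pi_eq_smul_volume_pi
    (f := Matrix.toLin' M) (by rw [hdet]; exact hM)
  have h1 : ∫ y, f y ∂(Measure.map (Matrix.toLin' M) volume)
      = ∫ z : Fin 2 → ℝ, f (M.mulVec z) := by
    rw [integral_map ((Matrix.toLin' M).continuous_on_pi.measurable.aemeasurable)
      hf.aestronglyMeasurable]
    simp [Matrix.toLin'_apply]
  rw [← h1, hmap, integral_smul_measure, ENNReal.toReal_ofReal (abs_nonneg _), hdet,
    smul_eq_mul, abs_inv]

lemma integral_exp_neg_dot : ∫ w : Fin 2 → ℝ, Real.exp (-(w ⬝ᵥ w)) = Real.pi := by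
  have h : ∀ w : Fin 2 → ℝ, Real.exp (-(w ⬝ᵥ w)) = ∏ i, Real.exp (-(1:ℝ) * (w i)^2) := by
    intro w
    rw [← Real.exp_sum]
    congr 1
    simp only [dotProduct]
    rw [← Finset.sum_neg_distrib]
    congr 1; ext i; ring
  simp_rw [h]
  rw [volume_pi]
  rw [integral_fintype_prod_eq_pow (ι := Fin 2) (fun x : ℝ => Real.exp (-(1:ℝ)*x^2)),
    integral_gaussian, Fintype.card_fin]
  rw [Real.sq_sqrt (by positivity)]
  norm_num

open scoped MatrixOrder in
lemma integral_exp_neg_quadForm (M : Matrix (Fin 2) (Fin 2) ℝ) (hM : M.PosDef) :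
    ∫ z : Fin 2 → ℝ, Real.exp (-(z ⬝ᵥ M.mulVec z)) = Real.pi / Real.sqrt M.det := by
  set S := CFC.sqrt M with hSdef
  have hS2 : S * S = M := by rw [← pow_two]; exact CFC.sq_sqrt M hM.posSemidef.nonneg
  have hHerm : Sᴴ = S := (CFC.sqrt_nonneg M).posSemidef.isHermitian
  have hSsym : Sᵀ = S := by rw [← Matrix.conjTranspose_eq_transpose_of_trivial]; exact hHerm
  have hdetS : S.det = Real.sqrt M.det := by
    have h1 : S.det * S.det = M.det := by rw [← Matrix.det_mul, hS2]
    have hp := (CFC.sqrt_nonneg M).posSemidef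
    have h2 : 0 ≤ S.det := by
      rw [hp.1.det_eq_prod_eigenvalues]
      exact Finset.prod_nonneg fun i _ => by simpa using hp.eigenvalues_nonneg i
    nlinarith [Real.sq_sqrt hM.det_pos.le, Real.sqrt_nonneg M.det]
  have hdetpos : 0 < Real.sqrt M.det := Real.sqrt_pos.mpr hM.det_pos
  have hq : ∀ z : Fin 2 → ℝ, z ⬝ᵥ M.mulVec z = (S.mulVec z) ⬝ᵥ (S.mulVec z) := by
    intro z
    rw [← hS2, ← Matrix.mulVec_mulVec, Matrix.dotProduct_mulVec, ← Matrix.vecMul_transpose, hSsym]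
  simp_rw [hq]
  have := integral_comp_mulVec S (by rw [hdetS]; positivity)
    (fun w => Real.exp (-(w ⬝ᵥ w))) (by simp only [dotProduct]; fun_prop)
  rw [this, integral_exp_neg_dot, hdetS, abs_of_pos hdetpos, inv_mul_eq_div]

lemma col_integral (Y : Matrix (Fin 2) (Fin 2) ℝ) (hY : Y.PosDef)
    (hquad : ∫ z : Fin 2 → ℝ, Real.exp (-(z ⬝ᵥ Y⁻¹.mulVec z)) = Real.pi / Real.sqrt Y⁻¹.det)
    (a : Fin 2 → ℝ) :
    ∫ z : Fin 2 → ℝ, (1 / (Real.pi * Real.sqrt Y.det)) *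
      Real.exp (-((z - a) ⬝ᵥ Y⁻¹.mulVec (z - a))) = 1 := by
  rw [integral_const_mul]
  rw [integral_sub_right_eq_self (fun v : Fin 2 → ℝ =>
    Real.exp (-(v ⬝ᵥ Y⁻¹.mulVec v))) a]
  rw [hquad, Matrix.det_nonsing_inv, Ring.inverse_eq_inv, Real.sqrt_inv]
  have h1 : 0 < Real.sqrt Y.det := Real.sqrt_pos.mpr hY.det_pos

  field_simp

/-- The Wigner kernel of a single-mode Gaussian channel:
`K(z, z') = (1/(π √det Y)) exp(-(z - X z' - δ)ᵀ Y⁻¹ (z - X z' - δ))` on `ℝ² × ℝ²`. -/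
noncomputable def gaussianKernel (Xm Y : Matrix (Fin 2) (Fin 2) ℝ) (δ : Fin 2 → ℝ)
    (z z' : Fin 2 → ℝ) : ℝ :=
  (1 / (Real.pi * Real.sqrt Y.det)) *
    Real.exp (-((z - Xm.mulVec z' - δ) ⬝ᵥ Y⁻¹.mulVec (z - Xm.mulVec z' - δ)))

/-- The Gaussian kernel with positive definite noise matrix `Y` and invertible rescaling
matrix `X` satisfies `∫ K(z, z') dz = 1` for all `z'` and `∫ K(z, z') dz' = 1/|det X|` for
all `z`; hence it is semidoubly stochastic (columns integrate to 1 and rows integrate to at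
most 1) if and only if `|det X| ≥ 1`. -/
theorem gaussianKernel_stochastic
    (Xm Y : Matrix (Fin 2) (Fin 2) ℝ) (hY : Y.PosDef) (hX : Xm.det ≠ 0)
    (δ : Fin 2 → ℝ) :
    (∀ z' : Fin 2 → ℝ, ∫ z : Fin 2 → ℝ, gaussianKernel Xm Y δ z z' = 1)
    ∧ (∀ z : Fin 2 → ℝ, ∫ z' : Fin 2 → ℝ, gaussianKernel Xm Y δ z z' = 1 / |Xm.det|)
    ∧ ((∀ z : Fin 2 → ℝ, ∫ z' : Fin 2 → ℝ, gaussianKernel Xm Y δ z z' ≤ 1)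
        ↔ 1 ≤ |Xm.det|) := by
  have hquad := integral_exp_neg_quadForm Y⁻¹ hY.inv
  have habs : (0:ℝ) < |Xm.det| := abs_pos.mpr hX
  have hcol : ∀ z' : Fin 2 → ℝ, ∫ z : Fin 2 → ℝ, gaussianKernel Xm Y δ z z' = 1 := by
    intro z'
    have := col_integral Y hY hquad (Xm.mulVec z' + δ)
    simp only [gaussianKernel, sub_sub]
    exact this
  have hrow : ∀ z : Fin 2 → ℝ, ∫ z' : Fin 2 → ℝ, gaussianKernel Xm Y δ z z' = 1 / |Xm.det| := by
    intro z
    have hc : Continuous fun w : Fin 2 → ℝ =>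
        (1 / (Real.pi * Real.sqrt Y.det)) *
          Real.exp (-((z - w - δ) ⬝ᵥ Y⁻¹.mulVec (z - w - δ))) := by
      refine continuous_const.mul (Real.continuous_exp.comp (Continuous.neg ?_))
      exact (cont_qf Y⁻¹).comp (by fun_prop)
    have h1 := integral_comp_mulVec Xm hX
      (fun w : Fin 2 → ℝ => (1 / (Real.pi * Real.sqrt Y.det)) *
        Real.exp (-((z - w - δ) ⬝ᵥ Y⁻¹.mulVec (z - w - δ)))) hc
    have h2 : ∫ w : Fin 2 → ℝ, (1 / (Real.pi * Real.sqrt Y.det)) *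
        Real.exp (-((z - w - δ) ⬝ᵥ Y⁻¹.mulVec (z - w - δ))) = 1 := by
      have h3 : ∀ w : Fin 2 → ℝ, z - w - δ = (z - δ) - w := fun w => sub_right_comm z w δ
      simp_rw [h3]
      rw [integral_sub_left_eq_self (fun v : Fin 2 → ℝ =>
        (1 / (Real.pi * Real.sqrt Y.det)) * Real.exp (-(v ⬝ᵥ Y⁻¹.mulVec v))) volume (z - δ)]
      have := col_integral Y hY hquad 0
      simpa using this
    calc ∫ z' : Fin 2 → ℝ, gaussianKernel Xm Y δ z z'
        = ∫ z' : Fin 2 → ℝ, (1 / (Real.pi * Real.sqrt Y.det)) *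
            Real.exp (-((z - Xm.mulVec z' - δ) ⬝ᵥ Y⁻¹.mulVec (z - Xm.mulVec z' - δ))) := rfl
      _ = |Xm.det|⁻¹ * ∫ w : Fin 2 → ℝ, (1 / (Real.pi * Real.sqrt Y.det)) *
            Real.exp (-((z - w - δ) ⬝ᵥ Y⁻¹.mulVec (z - w - δ))) := h1
      _ = 1 / |Xm.det| := by rw [h2, mul_one, one_div]
  refine ⟨hcol, hrow, ?_⟩
  constructor
  · intro h
    have := h 0
    rw [hrow 0] at this
    rwa [div_le_one habs] at this
  · intro h z
    rw [hrow z]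
    rw [div_le_one habs]
    exact h
end

section
/- If Φ is a trace-preserving positive map on trace-class operators such that for a quasiprobability representation the kernel K(x,y) = Tr[Δ(x) Φ(Δ'(y))] is nonnegative, then K is a stochastic kernel: ∫_X K(x,y) dμ(x) = 1 for almost all y; moreover K is semidoubly stochastic if and only if Φ is subunital (Φ*(𝟙) ≤ 𝟙, equivalently 𝟙 − Φ(𝟙) positive semidefinite in the adjoint formulation). -/
open MeasureTheory
open scoped ENNReal

/-- Let `Δ(x)`, `Δ'(y)` be (dual) families of phase-point operators on a Hilbert space `H`,
satisfying normalization (`Tr Δ(x) = Tr Δ'(y) = 1`) and (weak) completeness against the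
trace (`∫ Tr[Δ(x) T] dμ(x) = Tr T` and dually `∫ Tr[A Δ'(y)] dμ(y) = Tr A`).  Let `Φ` be a
trace-preserving positive map with adjoint `Φ*` (`Tr[A Φ(B)] = Tr[Φ*(A) B]`) such that the
kernel `K(x,y) = Tr[Δ(x) Φ(Δ'(y))]` is (real and) nonnegative.  Then `K` is a stochastic
kernel: `∫ K(x,y) dμ(x) = 1` for almost all `y`; moreover `K` is semidoubly stochastic
(rows integrate to at most `1` a.e.) if and only if `Φ` is subunital in the sense that
`Tr[Φ*(Δ(x))] ≤ 1` for almost all `x`. -/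
theorem channel_kernel_stochastic_and_sds_iff_subunital
    {X H : Type*} [MeasurableSpace X] (μ : Measure X)
    [NormedAddCommGroup H] [InnerProductSpace ℂ H] [CompleteSpace H]
    (Tr : (H →L[ℂ] H) →ₗ[ℂ] ℂ)
    (Φ Φstar : (H →L[ℂ] H) →ₗ[ℂ] (H →L[ℂ] H))
    (Δ Δ' : X → (H →L[ℂ] H))
    (hΔnorm : ∀ x, Tr (Δ x) = 1)
    (hΔ'norm : ∀ y, Tr (Δ' y) = 1)
    (htracePreserving : ∀ T, Tr (Φ T) = Tr T)
    (hcomplete : ∀ T, ∫ x, (Tr (Δ x * T)).re ∂μ = (Tr T).re)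
    (hdualComplete : ∀ A, ∫ y, (Tr (A * Δ' y)).re ∂μ = (Tr A).re)
    (hadjoint : ∀ A B, Tr (A * Φ B) = Tr (Φstar A * B))
    (hKnonneg : ∀ x y, 0 ≤ (Tr (Δ x * Φ (Δ' y))).re) :
    (∀ᵐ y ∂μ, ∫ x, (Tr (Δ x * Φ (Δ' y))).re ∂μ = 1)
    ∧ ((∀ᵐ x ∂μ, ∫ y, (Tr (Δ x * Φ (Δ' y))).re ∂μ ≤ 1)
        ↔ (∀ᵐ x ∂μ, (Tr (Φstar (Δ x))).re ≤ 1)) := by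
  constructor
  · filter_upwards with y
    rw [hcomplete (Φ (Δ' y)), htracePreserving, hΔ'norm]
    simp
  · have h : ∀ x, ∫ y, (Tr (Δ x * Φ (Δ' y))).re ∂μ = (Tr (Φstar (Δ x))).re := by
      intro x
      simp only [hadjoint]
      exact hdualComplete (Φstar (Δ x))
    constructor <;> intro H' <;> filter_upwards [H'] with x hx <;>
      [rw [← h x]; rw [h x]] <;> exact hx
end
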